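/- arXiv:2108.02168 — 9 statements merged into one kernel-verified Lean document; each statement's English description precedes it below -/
import Mathlib

section
/- Let α be a non-principal ultrafilter on ℕ and f : ℕ → ℕ. The following statements are equivalent: (i) f is α-faithful; (ii) α ∼_RK α^f; (iii) there exists a bijection g : ℕ → ℕ such that α^{g⁻¹ ∘ f} = α; (iv) f is α-injective. -/
/-- `f` is `α`-constant: the restriction of `f` to some `A ∈ α` is constant. -/
def AlphaConstant (α : Ultrafilter ℕ) (f : ℕ → ℕ) : Prop :=
  ∃ A ∈ α, ∃ c, ∀ i ∈ A, f i = c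

/-- `f` is `α`-injective: the restriction of `f` to some `A ∈ α` is injective. -/
def AlphaInjective (α : Ultrafilter ℕ) (f : ℕ → ℕ) : Prop :=
  ∃ A ∈ α, Set.InjOn f A

/-- `f` is `α`-faithful: `f` is not `α`-constant and there is `K ∈ α` such that
for every `A ⊆ ℕ`, `f[A ∩ K] ∈ α^f` implies `A ∩ K ∈ α`. -/
def AlphaFaithful (α : Ultrafilter ℕ) (f : ℕ → ℕ) : Prop :=
  ¬ AlphaConstant α f ∧
    ∃ K ∈ α, ∀ A : Set ℕ, f '' (A ∩ K) ∈ Ultrafilter.map f α → A ∩ K ∈ α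

/-- `α ∼_RK β` : there is a bijection `h : ℕ → ℕ` with `β = α^h`. -/
def RKEquiv (α β : Ultrafilter ℕ) : Prop :=
  ∃ h : ℕ → ℕ, Function.Bijective h ∧ β = Ultrafilter.map h α

/-!
The heart of the matter is Katětov's lemma: a map `k : ℕ → ℕ` with `α^k = α` is the identity on a
set in `α`. Indeed, the points with `k n < n` can be 2-coloured so that `n` and `k n` always differ
(by the parity of the length of the decreasing run from `n`), and so can the points with `n < k n`
(by parity in the orbit forest of `n ↦ max (k n) (n + 1)`, a map without periodic points); but one
colour class lies in `α = α^k`, so for `α`-almost every `n` the colours of `n` and `k n` agree.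
Applied to `k = g⁻¹ ∘ f`, this makes `f` injective on a set in `α`. Conversely, an injection on a
set in the non-principal `α` extends to a bijection of `ℕ` once that set is shrunk, within `α`, to
have infinite complement.
-/

open Filter Function Set

namespace Function

variable {X : Type*} {g : X → X}

theorem injective_iterate_apply_of_periodicPts_eq_empty (hg : periodicPts g = ∅) (x : X) :
    Injective fun n => g^[n] x := by
  have not_periodic : ∀ i d, g^[d + 1 + i] x ≠ g^[i] x := fun i d h => by
    have : g^[i] x ∈ periodicPts g :=
      mk_mem_periodicPts d.succ_pos (by rwa [IsPeriodicPt, IsFixedPt, ← iterate_add_apply])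
    simp [hg] at this
  intro i j h
  rcases lt_trichotomy i j with hij | rfl | hij
  · obtain ⟨d, rfl⟩ := Nat.exists_eq_add_of_lt hij
    exact absurd h.symm (by rw [add_assoc, add_comm]; exact not_periodic i d)
  · rfl
  · obtain ⟨d, rfl⟩ := Nat.exists_eq_add_of_lt hij
    exact absurd h (by rw [add_assoc, add_comm]; exact not_periodic j d)

theorem periodicPts_eq_empty_of_lt_apply [Preorder X] (hg : ∀ x, x < g x) :
    periodicPts g = ∅ := by
  refine eq_empty_of_forall_notMem fun x hx => ?_
  obtain ⟨n, hn, hper⟩ := mem_periodicPts.1 hx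
  have : StrictMono fun j => g^[j] x :=
    strictMono_nat_of_lt_succ fun j => by rw [iterate_succ_apply']; exact hg _
  exact (this hn).ne' hper

theorem exists_bool_apply_ne_of_periodicPts_eq_empty (hg : periodicPts g = ∅) :
    ∃ c : X → Bool, ∀ x, c (g x) ≠ c x := by
  have shift : ∀ {i j : ℕ} {x y : X}, g^[i] x = g^[j] y → ∀ s, g^[s + i] x = g^[j + s] y :=
    fun {i j x y} h s => by rw [iterate_add_apply, h, ← iterate_add_apply, add_comm]
  let orbitRel : Setoid X :=
    { r := fun x y => ∃ i j, g^[i] x = g^[j] y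
      iseqv :=
        { refl := fun x => ⟨0, 0, rfl⟩
          symm := fun ⟨i, j, h⟩ => ⟨j, i, h.symm⟩
          trans := fun ⟨i, j, h⟩ ⟨s, t, h'⟩ =>
            ⟨s + i, j + t, by rw [shift h, iterate_add_apply, h', ← iterate_add_apply]⟩ } }
  let root (x : X) : X := (Quotient.mk orbitRel x).out
  have : ∀ x, ∃ i j, g^[i] x = g^[j] (root x) := fun x =>
    orbitRel.symm (Quotient.mk_out (s := orbitRel) x)
  -- `x` is coloured by the parity of its distance `i + j` to the root of its orbit class, which is
  -- well defined because the iterates of the root are pairwise distinct.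
  choose i j hij using this
  refine ⟨fun x => decide ((i x + j x) % 2 = 0), fun x => ?_⟩
  have root_apply : root (g x) = root x := congrArg Quotient.out (Quotient.sound ⟨0, 1, rfl⟩)
  have hgx : g^[i (g x) + 1] x = g^[j (g x)] (root x) := by
    rw [iterate_succ_apply, hij (g x), root_apply]
  have : i (g x) + 1 + j x = i x + j (g x) :=
    injective_iterate_apply_of_periodicPts_eq_empty hg (root x) <| by
      change g^[i (g x) + 1 + j x] (root x) = g^[i x + j (g x)] (root x)
      rw [iterate_add_apply, ← hij x, ← iterate_add_apply, add_comm, iterate_add_apply, hgx,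
        ← iterate_add_apply]
  simp only [ne_eq, decide_eq_decide]
  omega

end Function

noncomputable def descentLength (k : ℕ → ℕ) (n : ℕ) : ℕ :=
  if k n < n then descentLength k (k n) + 1 else 0

theorem descentLength_of_apply_lt {k : ℕ → ℕ} {n : ℕ} (h : k n < n) :
    descentLength k n = descentLength k (k n) + 1 := by
  rw [descentLength, if_pos h]

theorem exists_bool_ne_of_apply_lt (k : ℕ → ℕ) :
    ∃ c : ℕ → Bool, ∀ n, k n < n → c (k n) ≠ c n :=
  ⟨fun n => decide (descentLength k n % 2 = 0), fun n h => by
    simp only [descentLength_of_apply_lt h, ne_eq, decide_eq_decide]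
    omega⟩

theorem exists_bool_ne_of_lt_apply (k : ℕ → ℕ) :
    ∃ c : ℕ → Bool, ∀ n, n < k n → c (k n) ≠ c n := by
  obtain ⟨c, hc⟩ := exists_bool_apply_ne_of_periodicPts_eq_empty
    (periodicPts_eq_empty_of_lt_apply (g := fun n => max (k n) (n + 1)) fun n => by omega)
  exact ⟨c, fun n h => by simpa only [max_eq_left (Nat.succ_le_of_lt h)] using hc n⟩

theorem Set.Infinite.exists_subset_infinite_diff_infinite {X : Type*} {s : Set X}
    (hs : s.Infinite) : ∃ t ⊆ s, t.Infinite ∧ (s \ t).Infinite := by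
  obtain ⟨t, u, htu, hdisj, hcard⟩ := hs.exists_union_disjoint_cardinal_eq_of_infinite
  have hdiff : s \ t = u := by rw [← htu, union_sdiff_cancel_left hdisj.inter_eq.subset]
  have ht_iff_hu : t.Infinite ↔ u.Infinite := by
    rw [← infinite_coe_iff, ← infinite_coe_iff, Cardinal.infinite_iff, Cardinal.infinite_iff, hcard]
  have ht : t.Infinite := by
    intro ht
    exact hs (htu ▸ ht.union (not_infinite.1 (mt ht_iff_hu.2 (not_infinite.2 ht))))
  exact ⟨t, htu ▸ subset_union_left, ht, hdiff ▸ ht_iff_hu.1 ht⟩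

theorem Set.InjOn.exists_equiv_eqOn {X : Type*} [Countable X] {f : X → X} {B : Set X}
    (hf : InjOn f B) (hB : Bᶜ.Infinite) (hfB : (f '' B)ᶜ.Infinite) :
    ∃ e : X ≃ X, EqOn e f B := by
  classical
  have := hB.to_subtype
  have := hfB.to_subtype
  obtain ⟨ψ⟩ : Nonempty (↥Bᶜ ≃ ↥(f '' B)ᶜ) := inferInstance
  refine ⟨Equiv.subtypeCongr (Equiv.Set.imageOfInjOn f B hf) ψ, fun x hx => ?_⟩
  rw [Equiv.subtypeCongr, Equiv.trans_apply, Equiv.trans_apply,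
    Equiv.sumCompl_symm_apply_of_pos hx]
  rfl

namespace Ultrafilter

variable {X : Type*} {α : Ultrafilter X}

theorem infinite_of_mem_of_le_cofinite (hα : (α : Filter X) ≤ cofinite) {s : Set X}
    (hs : s ∈ α) : s.Infinite :=
  have : ∀ᶠ x in (α : Filter X), x ∈ s := hs
  frequently_cofinite_iff_infinite.1 (this.frequently.filter_mono hα)

theorem eventually_apply_comp_eq_of_map_eq_self {Y : Type*} [Finite Y] {k : X → X}
    (h : map k α = α) (c : X → Y) : ∀ᶠ x in α, c (k x) = c x := by
  obtain ⟨y, hy⟩ := (map c α).eq_pure_of_finite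
  have hc : ∀ᶠ x in α, c x = y := by
    change c ⁻¹' {y} ∈ α
    rw [← mem_map, hy]
    rfl
  have hck : ∀ᶠ x in α, c (k x) = y := by rwa [← h] at hc
  filter_upwards [hc, hck] with x hx hkx
  rw [hx, hkx]

theorem exists_mem_subset_infinite_diff (hα : (α : Filter X) ≤ cofinite) {A : Set X}
    (hA : A ∈ α) : ∃ B ∈ α, B ⊆ A ∧ (A \ B).Infinite := by
  obtain ⟨t, htA, ht, hAt⟩ :=
    (infinite_of_mem_of_le_cofinite hα hA).exists_subset_infinite_diff_infinite
  by_cases htα : t ∈ α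
  · exact ⟨t, htα, htA, hAt⟩
  · refine ⟨A \ t, α.sdiff_mem_iff.2 ⟨hA, htα⟩, sdiff_subset, ?_⟩
    rwa [sdiff_sdiff_cancel_left htA]

theorem exists_equiv_eventually_eq [Countable X] (hα : (α : Filter X) ≤ cofinite) {f : X → X}
    {A : Set X} (hA : A ∈ α) (hf : InjOn f A) : ∃ e : X ≃ X, ∀ᶠ x in α, e x = f x := by
  obtain ⟨B, hB, hBA, hAB⟩ := exists_mem_subset_infinite_diff hα hA
  have hfB : (f '' B)ᶜ.Infinite := by
    refine (hAB.image (hf.mono sdiff_subset)).mono ?_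
    rw [hf.image_sdiff_subset hBA]
    exact sdiff_subset_compl _ _
  obtain ⟨e, he⟩ := (hf.mono hBA).exists_equiv_eqOn (hAB.mono fun x hx hxB => hx.2 hxB) hfB
  exact ⟨e, Filter.mem_of_superset hB he⟩

end Ultrafilter

theorem Ultrafilter.eventually_apply_eq_of_map_eq_self {α : Ultrafilter ℕ} {k : ℕ → ℕ}
    (h : map k α = α) : ∀ᶠ n in α, k n = n := by
  obtain ⟨c, hc⟩ := exists_bool_ne_of_apply_lt k
  obtain ⟨c', hc'⟩ := exists_bool_ne_of_lt_apply k
  filter_upwards [eventually_apply_comp_eq_of_map_eq_self h c,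
    eventually_apply_comp_eq_of_map_eq_self h c'] with n hn hn'
  rcases lt_trichotomy (k n) n with hlt | heq | hgt
  exacts [absurd hn (hc n hlt), heq, absurd hn' (hc' n hgt)]

variable {α : Ultrafilter ℕ} {f : ℕ → ℕ}

theorem AlphaFaithful.alphaInjective (hf : AlphaFaithful α f) : AlphaInjective α f := by
  obtain ⟨-, K, hK, hfaithful⟩ := hf
  obtain ⟨S, hSK, hSf⟩ := exists_subset_bijOn K f
  have himage : f '' (S ∩ K) ∈ Ultrafilter.map f α := by
    rw [inter_eq_left.2 hSK, hSf.image_eq, Ultrafilter.mem_map]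
    exact Filter.mem_of_superset hK (subset_preimage_image f K)
  exact ⟨S ∩ K, hfaithful S himage, hSf.injOn.mono inter_subset_left⟩

theorem AlphaInjective.not_alphaConstant (hα : (α : Filter ℕ) ≤ cofinite)
    (hf : AlphaInjective α f) : ¬ AlphaConstant α f := by
  rintro ⟨B, hB, c, hc⟩
  obtain ⟨A, hA, hinj⟩ := hf
  obtain ⟨x, hx, y, hy, hxy⟩ :=
    (Ultrafilter.infinite_of_mem_of_le_cofinite hα (α.inter_mem hA hB)).nontrivial
  exact hxy (hinj hx.1 hy.1 ((hc x hx.2).trans (hc y hy.2).symm))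

theorem AlphaInjective.alphaFaithful (hα : (α : Filter ℕ) ≤ cofinite)
    (hf : AlphaInjective α f) : AlphaFaithful α f := by
  refine ⟨hf.not_alphaConstant hα, ?_⟩
  obtain ⟨A, hA, hinj⟩ := hf
  refine ⟨A, hA, fun A' himage => Filter.mem_of_superset (α.inter_mem himage hA) ?_⟩
  rintro x ⟨⟨y, hy, hyx⟩, hxA⟩
  rwa [← hinj hy.2 hxA hyx]

theorem AlphaInjective.exists_equiv_map_symm_comp_eq (hα : (α : Filter ℕ) ≤ cofinite)
    (hf : AlphaInjective α f) : ∃ g : ℕ ≃ ℕ, Ultrafilter.map (g.symm ∘ f) α = α := by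
  obtain ⟨A, hA, hinj⟩ := hf
  obtain ⟨g, hg⟩ := Ultrafilter.exists_equiv_eventually_eq hα hA hinj
  refine ⟨g, Ultrafilter.coe_injective ?_⟩
  have : g.symm ∘ f =ᶠ[α] id := hg.mono fun n hn => by simp [← hn]
  rw [Ultrafilter.coe_map, Filter.map_congr this, Filter.map_id]

theorem rkEquiv_map_of_map_symm_comp_eq {g : ℕ ≃ ℕ}
    (hg : Ultrafilter.map (g.symm ∘ f) α = α) : RKEquiv α (Ultrafilter.map f α) :=
  ⟨g, g.bijective, calc
    Ultrafilter.map f α = Ultrafilter.map (g ∘ g.symm ∘ f) α := by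
      rw [← comp_assoc, g.self_comp_symm, id_comp]
    _ = Ultrafilter.map g α := by rw [← Ultrafilter.map_map, hg]⟩

theorem alphaInjective_of_rkEquiv_map (h : RKEquiv α (Ultrafilter.map f α)) :
    AlphaInjective α f := by
  obtain ⟨h, hbij, hmap⟩ := h
  let e := Equiv.ofBijective h hbij
  have hfix : Ultrafilter.map (e.symm ∘ f) α = α := by
    rw [← Ultrafilter.map_map, hmap, Ultrafilter.map_map]
    exact (congrArg (Ultrafilter.map · α) e.symm_comp_self).trans (Ultrafilter.map_id α)
  refine ⟨_, Ultrafilter.eventually_apply_eq_of_map_eq_self hfix, fun a ha b hb hab => ?_⟩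
  exact ha.symm.trans ((congrArg e.symm hab).trans hb)

theorem stmt_1 (α : Ultrafilter ℕ) (hα : (α : Filter ℕ) ≤ Filter.cofinite)
    (f : ℕ → ℕ) :
    List.TFAE
      [AlphaFaithful α f,
       RKEquiv α (Ultrafilter.map f α),
       ∃ g : ℕ ≃ ℕ, Ultrafilter.map (⇑g.symm ∘ f) α = α,
       AlphaInjective α f] := by
  tfae_have 1 → 4 := AlphaFaithful.alphaInjective
  tfae_have 4 → 1 := AlphaInjective.alphaFaithful hα
  tfae_have 4 → 3 := AlphaInjective.exists_equiv_map_symm_comp_eq hα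
  tfae_have 3 → 2 := fun ⟨_, hg⟩ => rkEquiv_map_of_map_symm_comp_eq hg
  tfae_have 2 → 4 := alphaInjective_of_rkEquiv_map
  tfae_finish
end

section
/- Let α be a non-principal ultrafilter on ℕ and f : ℕ → ℕ. The following statements are equivalent: (i) f is α-finite-to-one; (ii) g ≪ f for some α-injective g : ℕ → ℕ; (iii) there exist an α-injective g : ℕ → ℕ and h : ℕ → ℕ such that g ≤ h ∘ f pointwise; (iv) there exist an α-injective g : ℕ → ℕ and a strictly increasing h : ℕ → ℕ such that g⁻¹([h(n),∞)) ⊆ f⁻¹([n,∞)) for every n ∈ ℕ. -/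
/-- `f` is `α`-finite-to-one: the restriction of `f` to some `A ∈ α` is finite-to-one,
i.e. every fiber of `f` restricted to `A` is finite. -/
def AlphaFiniteToOne (α : Ultrafilter ℕ) (f : ℕ → ℕ) : Prop :=
  ∃ A ∈ α, ∀ k : ℕ, (A ∩ f ⁻¹' {k}).Finite

/-- `g ≪ f` : `g ≤ h ∘ f` pointwise for some strictly increasing `h : ℕ → ℕ`. -/
def LL (g f : ℕ → ℕ) : Prop :=
  ∃ h : ℕ → ℕ, StrictMono h ∧ ∀ i, g i ≤ h (f i)

/-!
If `f` is finite-to-one on `A`, the identity of `A` (extended by `0`) is injective on `A` and is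
dominated by `h ∘ f` as soon as `h k` bounds the finite fiber of `k`; such an `h` can be taken
strictly increasing. Conversely, if `g` is injective on `A` and `g ≤ h ∘ f`, then `g` maps the
fiber of `k` in `A` injectively into `[0, h k]`, so that fiber is finite. For (iv), strict
monotonicity of `h` turns `h n ≤ g i ≤ h (f i)` into `n ≤ f i`; conversely (iv) gives
`g ≤ h' ∘ f` with `h' k = h (k + 1)`.
-/

open Set

lemma Nat.exists_strictMono_forall_le (b : ℕ → ℕ) : ∃ h : ℕ → ℕ, StrictMono h ∧ ∀ k, b k ≤ h k :=
  ⟨fun k => k + ∑ j ∈ Finset.range (k + 1), b j,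
    strictMono_nat_of_lt_succ fun k => by
      simp only [Finset.sum_range_succ _ (k + 1)]
      omega,
    fun k => by
      dsimp only
      have := Finset.single_le_sum (fun j _ => Nat.zero_le (b j)) (Finset.self_mem_range_succ k)
      omega⟩

lemma exists_injOn_LL_of_finite_fibers {A : Set ℕ} {f : ℕ → ℕ}
    (hA : ∀ k, (A ∩ f ⁻¹' {k}).Finite) : ∃ g : ℕ → ℕ, InjOn g A ∧ LL g f := by
  classical
  choose b hb using fun k => (hA k).bddAbove
  obtain ⟨h, hh, hbh⟩ := Nat.exists_strictMono_forall_le b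
  refine ⟨fun i => if i ∈ A then i else 0, fun i hi j hj hij => ?_, h, hh, fun i => ?_⟩
  · simpa [hi, hj] using hij
  · dsimp only
    split_ifs with hi
    · exact (hb (f i) ⟨hi, rfl⟩).trans (hbh (f i))
    · exact Nat.zero_le _

lemma finite_fibers_of_injOn_of_le_comp {A : Set ℕ} {f g h : ℕ → ℕ} (hg : InjOn g A)
    (hle : ∀ i, g i ≤ h (f i)) (k : ℕ) : (A ∩ f ⁻¹' {k}).Finite := by
  refine Finite.of_finite_image ((finite_Iic (h k)).subset ?_) (hg.mono inter_subset_left)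
  rintro _ ⟨i, ⟨-, rfl⟩, rfl⟩
  exact hle i

lemma preimage_Ici_subset_of_le_comp {f g h : ℕ → ℕ} (hh : StrictMono h)
    (hle : ∀ i, g i ≤ h (f i)) (n : ℕ) : g ⁻¹' {m | h n ≤ m} ⊆ f ⁻¹' {m | n ≤ m} :=
  fun i hi => hh.le_iff_le.mp (le_trans hi (hle i))

lemma le_comp_succ_of_preimage_Ici_subset {f g h : ℕ → ℕ}
    (hsub : ∀ n : ℕ, g ⁻¹' {m | h n ≤ m} ⊆ f ⁻¹' {m | n ≤ m}) (i : ℕ) : g i ≤ h (f i + 1) := by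
  by_contra! hlt
  exact absurd (hsub (f i + 1) hlt.le) (Nat.not_succ_le_self (f i))

theorem stmt_2_general (α : Ultrafilter ℕ)
    (f : ℕ → ℕ) :
    List.TFAE
      [AlphaFiniteToOne α f,
       ∃ g : ℕ → ℕ, AlphaInjective α g ∧ LL g f,
       ∃ g h : ℕ → ℕ, AlphaInjective α g ∧ ∀ i, g i ≤ h (f i),
       ∃ g h : ℕ → ℕ, AlphaInjective α g ∧ StrictMono h ∧
         ∀ n : ℕ, g ⁻¹' {m | h n ≤ m} ⊆ f ⁻¹' {m | n ≤ m}] := by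
  tfae_have 1 → 2 := by
    rintro ⟨A, hAα, hA⟩
    obtain ⟨g, hg, hgf⟩ := exists_injOn_LL_of_finite_fibers hA
    exact ⟨g, ⟨A, hAα, hg⟩, hgf⟩
  tfae_have 2 → 3 := fun ⟨g, hg, h, _, hle⟩ => ⟨g, h, hg, hle⟩
  tfae_have 3 → 1 := fun ⟨_, _, ⟨A, hAα, hg⟩, hle⟩ =>
    ⟨A, hAα, finite_fibers_of_injOn_of_le_comp hg hle⟩
  tfae_have 2 → 4 := fun ⟨g, hg, h, hh, hle⟩ =>
    ⟨g, h, hg, hh, preimage_Ici_subset_of_le_comp hh hle⟩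
  tfae_have 4 → 3 := fun ⟨g, h, hg, _, hsub⟩ =>
    ⟨g, fun k => h (k + 1), hg, le_comp_succ_of_preimage_Ici_subset hsub⟩
  tfae_finish

theorem stmt_2 (α : Ultrafilter ℕ) (hα : (α : Filter ℕ) ≤ Filter.cofinite)
    (f : ℕ → ℕ) :
    List.TFAE
      [AlphaFiniteToOne α f,
       ∃ g : ℕ → ℕ, AlphaInjective α g ∧ LL g f,
       ∃ g h : ℕ → ℕ, AlphaInjective α g ∧ ∀ i, g i ≤ h (f i),
       ∃ g h : ℕ → ℕ, AlphaInjective α g ∧ StrictMono h ∧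
         ∀ n : ℕ, g ⁻¹' {m | h n ≤ m} ⊆ f ⁻¹' {m | n ≤ m}] :=
  stmt_2_general α f
end

section
/- A non-principal ultrafilter α on ℕ is a P-point if and only if for every f : ℕ → ℕ that is not α-constant there exists an α-faithful g : ℕ → ℕ such that g ≪ f. -/
/-- `α` is a P-point: for every partition `{A n : n ∈ ℕ}` of `ℕ` with every `A n ∉ α`
there is `X ∈ α` with `X ∩ A n` finite for every `n`. -/
def IsPPoint (α : Ultrafilter ℕ) : Prop :=
  ∀ A : ℕ → Set ℕ, (Pairwise fun m n => Disjoint (A m) (A n)) →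
    (⋃ n, A n) = Set.univ → (∀ n, A n ∉ α) →
    ∃ X ∈ α, ∀ n, (X ∩ A n).Finite

/-- Every member of an ultrafilter extending the cofinite filter is infinite. -/
lemma mem_infinite_of_le_cofinite (α : Ultrafilter ℕ)
    (hα : (α : Filter ℕ) ≤ Filter.cofinite) {A : Set ℕ} (hA : A ∈ α) : A.Infinite := by
  intro hfin
  have hc : Aᶜ ∈ α := hα (by simpa [Filter.mem_cofinite] using hfin)
  have h2 : A ∩ Aᶜ ∈ α := Filter.inter_mem hA hc
  rw [Set.inter_compl_self] at h2
  exact Filter.empty_notMem (α : Filter ℕ) h2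

theorem stmt_3 (α : Ultrafilter ℕ) (hα : (α : Filter ℕ) ≤ Filter.cofinite) :
    IsPPoint α ↔
      ∀ f : ℕ → ℕ, ¬ AlphaConstant α f →
        ∃ g : ℕ → ℕ, AlphaFaithful α g ∧ LL g f := by
  classical
  constructor
  · -- P-point → every non-constant f admits a faithful g ≪ f
    intro hP f hf
    -- the fibers of f form a partition with no member in α
    obtain ⟨X, hX, hXfin⟩ := hP (fun n => f ⁻¹' {n})
      (by
        intro m n hmn
        rw [Set.disjoint_left]
        intro x hxm hxn
        exact hmn (by simp at hxm hxn; omega))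
      (by
        ext x
        simp only [Set.mem_iUnion, Set.mem_preimage, Set.mem_singleton_iff, Set.mem_univ,
          iff_true]
        exact ⟨f x, rfl⟩)
      (by
        intro n hn
        exact hf ⟨f ⁻¹' {n}, hn, n, fun i hi => hi⟩)
    set c : ℕ → ℕ := fun n => (X ∩ f ⁻¹' {n}).ncard with hc
    set s : ℕ → ℕ := fun n => ∑ m ∈ Finset.range n, (c m + 1) with hs
    have hs_succ : ∀ n, s (n + 1) = s n + (c n + 1) := by
      intro n; simp [hs, Finset.sum_range_succ]
    have hsmono : StrictMono s := by
      apply strictMono_nat_of_lt_succ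
      intro n; rw [hs_succ]; omega
    set cnt : ℕ → ℕ := fun x => ({y | y ∈ X ∧ f y = f x ∧ y < x}).ncard with hcnt
    set g : ℕ → ℕ := fun x => if x ∈ X then s (f x) + cnt x else 0 with hg
    have hcnt_lt : ∀ x ∈ X, cnt x < c (f x) := by
      intro x hx
      apply Set.ncard_lt_ncard _ (hXfin (f x))
      have hsub : {y | y ∈ X ∧ f y = f x ∧ y < x} ⊆ X ∩ f ⁻¹' {f x} :=
        fun y hy => ⟨hy.1, hy.2.1⟩
      rw [Set.ssubset_iff_of_subset hsub]
      exact ⟨x, ⟨hx, rfl⟩, fun h => lt_irrefl x h.2.2⟩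
    have hg_lb : ∀ x ∈ X, s (f x) ≤ g x := by
      intro x hx; simp [hg, if_pos hx]
    have hg_ub : ∀ x ∈ X, g x < s (f x + 1) := by
      intro x hx
      have := hcnt_lt x hx
      rw [hs_succ]
      simp only [hg, if_pos hx]
      omega
    -- g is injective on X
    have hcnt_mono : ∀ x ∈ X, ∀ y ∈ X, f x = f y → x < y → cnt x < cnt y := by
      intro x hx y hy hfxy hxy
      apply Set.ncard_lt_ncard
      · rw [Set.ssubset_iff_of_subset]
        · exact ⟨x, ⟨hx, hfxy, hxy⟩, fun h => lt_irrefl x h.2.2⟩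
        · intro z hz; exact ⟨hz.1, hz.2.1.trans hfxy, hz.2.2.trans hxy⟩
      · exact (hXfin (f y)).subset (fun z hz => ⟨hz.1, hz.2.1⟩)
    have hinj : ∀ x ∈ X, ∀ y ∈ X, g x = g y → x = y := by
      intro x hx y hy hxy
      have hfxy : f x = f y := by
        rcases lt_trichotomy (f x) (f y) with h | h | h
        · have h1 := hg_ub x hx
          have h2 := hg_lb y hy
          have h3 : s (f x + 1) ≤ s (f y) := hsmono.monotone (by omega)
          omega
        · exact h
        · have h1 := hg_ub y hy
          have h2 := hg_lb x hx
          have h3 : s (f y + 1) ≤ s (f x) := hsmono.monotone (by omega)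
          omega
      have heq : cnt x = cnt y := by
        simp only [hg, if_pos hx, if_pos hy, hfxy] at hxy
        omega
      rcases lt_trichotomy x y with h | h | h
      · exact absurd heq (Nat.ne_of_lt (hcnt_mono x hx y hy hfxy h))
      · exact h
      · exact absurd heq.symm (Nat.ne_of_lt (hcnt_mono y hy x hx hfxy.symm h))
    refine ⟨g, ⟨?_, X, hX, ?_⟩, fun n => s (n + 1), fun a b hab => hsmono (by omega), ?_⟩
    · -- g is not α-constant
      rintro ⟨B, hB, c0, hBc⟩
      have hBX : B ∩ X ∈ α := Filter.inter_mem hB hX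
      obtain ⟨x, hx, y, hy, hne⟩ :=
        (mem_infinite_of_le_cofinite α hα hBX).nontrivial
      exact hne (hinj x hx.2 y hy.2 (by rw [hBc x hx.1, hBc y hy.1]))
    · -- g is faithful with K = X
      intro A hA
      rw [Ultrafilter.mem_map] at hA
      have hmem : X ∩ g ⁻¹' (g '' (A ∩ X)) ∈ α := Filter.inter_mem hX hA
      apply Filter.mem_of_superset hmem
      rintro x ⟨hxX, hximg⟩
      obtain ⟨a, haAX, hax⟩ := hximg
      rwa [← hinj a haAX.2 x hxX hax]
    · -- g ≪ f
      intro i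
      by_cases hi : i ∈ X
      · exact (hg_ub i hi).le
      · simp [hg, if_neg hi]
  · -- converse
    intro H A hdisj hcov hAn
    have hmem : ∀ x : ℕ, ∃ n, x ∈ A n := by
      intro x
      have : x ∈ ⋃ n, A n := by rw [hcov]; trivial
      exact Set.mem_iUnion.mp this
    set f : ℕ → ℕ := fun x => (hmem x).choose with hfdef
    have hfx : ∀ x, x ∈ A (f x) := fun x => (hmem x).choose_spec
    have hfuniq : ∀ x n, x ∈ A n → f x = n := by
      intro x n hx
      by_contra hne
      exact Set.disjoint_left.mp (hdisj hne) (hfx x) hx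
    have hfnc : ¬ AlphaConstant α f := by
      rintro ⟨B, hB, c0, hBc⟩
      apply hAn c0
      apply Filter.mem_of_superset hB
      intro x hx
      have := hfx x
      rwa [hBc x hx] at this
    obtain ⟨g, ⟨hgnc, K, hK, hfaith⟩, h, hmono, hgh⟩ := H f hfnc
    set S : Set ℕ := {m | (K ∩ g ⁻¹' {m}).Infinite} with hS
    set T : Set ℕ := K ∩ g ⁻¹' S with hT
    by_cases hTα : T ∈ α
    · -- impossible: split T into minimal and non-minimal elements of infinite fibers
      exfalso
      set A' : Set ℕ := {x | x ∈ T ∧ x = sInf (K ∩ g ⁻¹' {g x})} with hA'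
      set A'' : Set ℕ := T \ A' with hA''
      have hA'K : A' ⊆ K := fun x hx => hx.1.1
      have hA''K : A'' ⊆ K := fun x hx => hx.1.1
      -- A' ∩ K ∈ α
      have hA'α : A' ∩ K ∈ α := by
        apply hfaith
        rw [Ultrafilter.mem_map]
        apply Filter.mem_of_superset hTα
        intro x hx
        have hSx : g x ∈ S := hx.2
        have hne : (K ∩ g ⁻¹' {g x}).Nonempty := hSx.nonempty
        set μ := sInf (K ∩ g ⁻¹' {g x}) with hμ
        have hμmem : μ ∈ K ∩ g ⁻¹' {g x} := Nat.sInf_mem hne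
        have hgμ : g μ = g x := hμmem.2
        have hμA' : μ ∈ A' := by
          refine ⟨⟨hμmem.1, ?_⟩, ?_⟩
          · show g μ ∈ S; rwa [hgμ]
          · rw [hgμ]
        exact ⟨μ, ⟨hμA', hμmem.1⟩, hgμ⟩
      -- A'' ∩ K ∈ α
      have hA''α : A'' ∩ K ∈ α := by
        apply hfaith
        rw [Ultrafilter.mem_map]
        apply Filter.mem_of_superset hTα
        intro x hx
        have hSx : g x ∈ S := hx.2
        have hinf : (K ∩ g ⁻¹' {g x}).Infinite := hSx
        set μ := sInf (K ∩ g ⁻¹' {g x}) with hμ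
        obtain ⟨z, hz, hzμ⟩ := (hinf.diff (Set.finite_singleton μ)).nonempty
        have hzμ' : z ≠ μ := hzμ
        have hgz : g z = g x := hz.2
        have hzT : z ∈ T := ⟨hz.1, by show g z ∈ S; rwa [hgz]⟩
        have hzA'' : z ∈ A'' := by
          refine ⟨hzT, fun hzA' => hzμ' ?_⟩
          have := hzA'.2
          rwa [hgz] at this
        exact ⟨z, ⟨hzA'', hz.1⟩, hgz⟩
      have hdisj' : (A' ∩ K) ∩ (A'' ∩ K) = ∅ := by
        ext x
        simp only [Set.mem_inter_iff, Set.mem_empty_iff_false, iff_false]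
        rintro ⟨⟨hx1, -⟩, ⟨hx2, -⟩⟩
        exact hx2.2 hx1
      have := Filter.inter_mem hA'α hA''α
      rw [hdisj'] at this
      exact Filter.empty_notMem (α : Filter ℕ) this
    · -- X := K \ g⁻¹(S) works
      have hTc : Tᶜ ∈ α := Ultrafilter.compl_mem_iff_notMem.mpr hTα
      set X : Set ℕ := K ∩ (g ⁻¹' S)ᶜ with hX
      have hXα : X ∈ α := by
        have : K ∩ Tᶜ ∈ α := Filter.inter_mem hK hTc
        apply Filter.mem_of_superset this
        rintro x ⟨hxK, hxTc⟩
        refine ⟨hxK, fun hxS => hxTc ⟨hxK, hxS⟩⟩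
      refine ⟨X, hXα, fun n => ?_⟩
      have hsub : X ∩ A n ⊆ ⋃ m ∈ Finset.range (h n + 1), (X ∩ g ⁻¹' {m}) := by
        rintro x ⟨hxX, hxA⟩
        have hfx' : f x = n := hfuniq x n hxA
        have : g x ≤ h n := by rw [← hfx']; exact hgh x
        simp only [Set.mem_iUnion]
        exact ⟨g x, Finset.mem_range.mpr (by omega), hxX, rfl⟩
      apply Set.Finite.subset _ hsub
      apply Set.Finite.biUnion (Finset.range (h n + 1)).finite_toSet
      intro m _
      by_cases hmS : m ∈ S
      · have : X ∩ g ⁻¹' {m} = ∅ := by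
          ext x
          simp only [Set.mem_inter_iff, Set.mem_preimage, Set.mem_singleton_iff,
            Set.mem_empty_iff_false, iff_false]
          rintro ⟨⟨-, hx2⟩, hgx⟩
          exact hx2 (by rw [Set.mem_preimage, hgx]; exact hmS)
        rw [this]; exact Set.finite_empty
      · have hfin : (K ∩ g ⁻¹' {m}).Finite := Set.not_infinite.mp hmS
        exact hfin.subset (fun x hx => ⟨hx.1.1, hx.2⟩)
end

section
/- Let α be a non-principal ultrafilter on a countably infinite metric space X. If α is not Cauchy, then there exists δ > 0 such that every A ∈ α contains an infinite δ-discrete subset. -/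
/-- `α` is Cauchy: for every `ε > 0` there is `A ∈ α` with diameter at most `ε`. -/
def UltraCauchy {X : Type*} [MetricSpace X] (α : Ultrafilter X) : Prop :=
  ∀ ε : ℝ, 0 < ε → ∃ A ∈ α, ∀ a ∈ A, ∀ b ∈ A, dist a b ≤ ε

/-- `A` is `δ`-discrete: any two distinct points of `A` are at distance at least `δ`. -/
def DeltaDiscrete {X : Type*} [MetricSpace X] (δ : ℝ) (A : Set X) : Prop :=
  ∀ a ∈ A, ∀ b ∈ A, a ≠ b → δ ≤ dist a b

theorem stmt_4 {X : Type*} [MetricSpace X] [Countable X] [Infinite X]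
    (α : Ultrafilter X) (hα : (α : Filter X) ≤ Filter.cofinite)
    (hnc : ¬ UltraCauchy α) :
    ∃ δ : ℝ, 0 < δ ∧ ∀ A ∈ α, ∃ B ⊆ A, B.Infinite ∧ DeltaDiscrete δ B := by
  classical
  unfold UltraCauchy at hnc
  push_neg at hnc
  obtain ⟨ε, hε, hbig⟩ := hnc
  refine ⟨ε / 2, by positivity, fun A hAα => ?_⟩
  have key : ∀ x : X, (Metric.closedBall x (ε / 2))ᶜ ∈ α := by
    intro x
    rw [Ultrafilter.compl_mem_iff_notMem]
    intro hmem
    obtain ⟨a, ha, b, hb, hab⟩ := hbig _ hmem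
    have : dist a b ≤ ε := by
      calc dist a b ≤ dist a x + dist x b := dist_triangle a x b
        _ ≤ ε / 2 + ε / 2 := add_le_add ha (by rw [dist_comm]; exact hb)
        _ = ε := by ring
    linarith
  let pick : Set X → X := fun S => if h : S.Nonempty then h.choose else Classical.arbitrary X
  have pick_mem : ∀ S : Set X, S.Nonempty → pick S ∈ S := by
    intro S hS
    simp only [pick, dif_pos hS]
    exact hS.choose_spec
  let T : ℕ → Set X := fun n =>
    Nat.rec A (fun _ S => S ∩ (Metric.closedBall (pick S) (ε / 2))ᶜ) n
  have hT : ∀ n, T n ∈ α := by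
    intro n
    induction n with
    | zero => exact hAα
    | succ n ih => exact Filter.inter_mem ih (key _)
  have hTne : ∀ n, (T n).Nonempty := fun n => Filter.nonempty_of_mem (hT n)
  let f : ℕ → X := fun n => pick (T n)
  have hf_mem : ∀ n, f n ∈ T n := fun n => pick_mem _ (hTne n)
  have hmono : ∀ m n, m ≤ n → T n ⊆ T m := by
    intro m n hmn
    induction n with
    | zero => simp_all
    | succ n ih =>
      rcases Nat.lt_or_ge m (n + 1) with h | h
      · exact (Set.inter_subset_left).trans (ih (Nat.lt_succ_iff.mp h))
      · have : m = n + 1 := le_antisymm hmn h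
        subst this; exact subset_rfl
  have hdist : ∀ m n, m < n → ε / 2 < dist (f n) (f m) := by
    intro m n hmn
    have : f n ∈ T (m + 1) := hmono (m + 1) n hmn (hf_mem n)
    have h2 : f n ∈ (Metric.closedBall (f m) (ε / 2))ᶜ := this.2
    simpa [Metric.mem_closedBall, not_le] using h2
  have hdist' : ∀ m n, m ≠ n → ε / 2 ≤ dist (f m) (f n) := by
    intro m n hmn
    rcases hmn.lt_or_gt with h | h
    · rw [dist_comm]; exact (hdist m n h).le
    · exact (hdist n m h).le
  have hinj : Function.Injective f := by
    intro m n h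
    by_contra hne
    have := hdist' m n hne
    rw [h, dist_self] at this
    linarith
  refine ⟨Set.range f, ?_, Set.infinite_range_of_injective hinj, ?_⟩
  · rintro x ⟨n, rfl⟩
    exact hmono 0 n (Nat.zero_le n) (hf_mem n)
  · rintro a ⟨m, rfl⟩ b ⟨n, rfl⟩ hne
    exact hdist' m n (fun h => hne (by rw [h]))
end

section
/- Let α be a non-principal ultrafilter on a countably infinite metric space X. If α is selective, then α is either Cauchy or discrete. -/
/-- `α` is discrete: there are `δ > 0` and `A ∈ α` such that any two distinct points
of `A` are at distance at least `δ`. -/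
def UltraDiscrete {X : Type*} [MetricSpace X] (α : Ultrafilter X) : Prop :=
  ∃ δ : ℝ, 0 < δ ∧ ∃ A ∈ α, ∀ a ∈ A, ∀ b ∈ A, a ≠ b → δ ≤ dist a b

/-- `α` is selective: every `g` is either `α`-injective or `α`-constant
(identifying the countably infinite space `X` with `ℕ` via a fixed enumeration). -/
def UltraSelective {X : Type*} (α : Ultrafilter X) : Prop :=
  ∀ g : X → X, (∃ A ∈ α, Set.InjOn g A) ∨ (∃ A ∈ α, ∃ c, ∀ i ∈ A, g i = c)

open Filter Set

section

variable {X : Type*} {α : Ultrafilter X}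

lemma Ultrafilter.infinite_of_le_cofinite (hα : (α : Filter X) ≤ cofinite) {A : Set X}
    (hA : A ∈ α) : A.Infinite :=
  frequently_cofinite_iff_infinite.1 ((Eventually.frequently hA).filter_mono hα)

lemma UltraSelective.map_equiv {Y : Type*} (hsel : UltraSelective α) (e : X ≃ Y) :
    UltraSelective (α.map e) := by
  intro g
  have hmem : ∀ {A : Set X}, A ∈ α → e '' A ∈ α.map e := fun hA => by
    rwa [Ultrafilter.mem_map, e.preimage_image]
  rcases hsel (e.symm ∘ g ∘ e) with ⟨A, hA, hinj⟩ | ⟨A, hA, c, hc⟩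
  · refine .inl ⟨e '' A, hmem hA, ?_⟩
    rintro _ ⟨a, ha, rfl⟩ _ ⟨b, hb, rfl⟩ h
    rw [hinj ha hb (by simp [h])]
  · refine .inr ⟨e '' A, hmem hA, e c, ?_⟩
    rintro _ ⟨a, ha, rfl⟩
    simp [← hc a ha]

end

/-- The blocks `[gapSeq φ k, gapSeq φ (k + 1))` partition `ℕ`, and `φ` maps each block below
the end of the next one. -/
def gapSeq (φ : ℕ → ℕ) : ℕ → ℕ
  | 0 => 0
  | k + 1 => gapSeq φ k + 1 + (Finset.range (gapSeq φ k + 1)).sup φ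

lemma gapSeq_strictMono (φ : ℕ → ℕ) : StrictMono (gapSeq φ) :=
  strictMono_nat_of_lt_succ fun k => by simp only [gapSeq]; omega

lemma lt_gapSeq_succ (φ : ℕ → ℕ) {n k : ℕ} (h : n ≤ gapSeq φ k) :
    φ n < gapSeq φ (k + 1) := by
  have := Finset.le_sup (f := φ) (Finset.mem_range.2 (by omega : n < gapSeq φ k + 1))
  simp only [gapSeq]
  omega

lemma exists_lt_gapSeq_succ (φ : ℕ → ℕ) (y : ℕ) : ∃ k, y < gapSeq φ (k + 1) :=
  ⟨y, (gapSeq_strictMono φ).id_le (y + 1)⟩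

def gapIndex (φ : ℕ → ℕ) (y : ℕ) : ℕ :=
  Nat.find (exists_lt_gapSeq_succ φ y)

lemma lt_gapSeq_gapIndex_succ (φ : ℕ → ℕ) (y : ℕ) : y < gapSeq φ (gapIndex φ y + 1) :=
  Nat.find_spec (exists_lt_gapSeq_succ φ y)

lemma gapSeq_gapIndex_le (φ : ℕ → ℕ) (y : ℕ) : gapSeq φ (gapIndex φ y) ≤ y := by
  cases h : gapIndex φ y with
  | zero => simp [gapSeq]
  | succ k =>
    exact not_lt.1 (Nat.find_min (exists_lt_gapSeq_succ φ y) (show k < gapIndex φ y by omega))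

lemma gapIndex_mono (φ : ℕ → ℕ) : Monotone (gapIndex φ) :=
  fun _ _ hxy => Nat.find_mono fun _ hk => hxy.trans_lt hk

lemma Set.InjOn.exists_forall_lt {f : ℕ → ℕ} {C : Set ℕ} (hf : C.InjOn f) (n : ℕ) :
    ∃ m, ∀ y ∈ C, m < y → n < f y := by
  have hfin : {y ∈ C | f y ≤ n}.Finite :=
    Finite.of_finite_image ((finite_Iic n).subset (by rintro _ ⟨y, hy, rfl⟩; exact hy.2))
      (hf.mono fun _ hy => hy.1)
  obtain ⟨m, hm⟩ := hfin.bddAbove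
  exact ⟨m, fun y hy hmy => not_le.1 fun hfy => (hm ⟨hy, hfy⟩).not_gt hmy⟩

section Nat

variable {U : Ultrafilter ℕ}

lemma UltraSelective.exists_injOn (hsel : UltraSelective U) {f : ℕ → ℕ}
    (hf : ∀ n, {y | f y = n} ∉ U) : ∃ C ∈ U, C.InjOn f :=
  (hsel f).resolve_right fun ⟨_, hA, c, hc⟩ => hf c (mem_of_superset hA hc)

lemma UltraSelective.exists_sparse (hU : (U : Filter ℕ) ≤ cofinite) (hsel : UltraSelective U)
    (φ : ℕ → ℕ) : ∃ B ∈ U, ∀ x ∈ B, ∀ y ∈ B, x < y → φ x < y := by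
  set K := gapIndex φ
  obtain ⟨C, hC, hinj⟩ := hsel.exists_injOn (f := K) fun k hk =>
    Ultrafilter.infinite_of_le_cofinite hU hk <| (finite_Iio (gapSeq φ (k + 1))).subset
      fun y (hy : K y = k) => hy ▸ lt_gapSeq_gapIndex_succ φ y
  obtain ⟨P, hP, hpar⟩ : ∃ P ∈ U, ∀ x ∈ P, ∀ y ∈ P, K x % 2 = K y % 2 := by
    rcases U.em (fun y => K y % 2 = 0) with h | h
    · exact ⟨_, h, fun x (hx : K x % 2 = 0) y (hy : K y % 2 = 0) => by omega⟩
    · exact ⟨_, h, fun x (hx : ¬K x % 2 = 0) y (hy : ¬K y % 2 = 0) => by omega⟩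
  refine ⟨C ∩ P, inter_mem hC hP, fun x ⟨hxC, hxP⟩ y ⟨hyC, hyP⟩ hxy => ?_⟩
  -- distinct blocks of equal parity leave a whole block between `x` and `y`
  have hgap : K x + 2 ≤ K y := by
    have hle : K x ≤ K y := gapIndex_mono φ hxy.le
    have hne : K x ≠ K y := fun h => hxy.ne (hinj hxC hyC h)
    have := hpar x hxP y hyP
    omega
  calc φ x < gapSeq φ (K x + 2) := lt_gapSeq_succ φ (lt_gapSeq_gapIndex_succ φ x).le
    _ ≤ gapSeq φ (K y) := (gapSeq_strictMono φ).monotone hgap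
    _ ≤ y := gapSeq_gapIndex_le φ y

lemma UltraSelective.exists_diagonal (hU : (U : Filter ℕ) ≤ cofinite) (hsel : UltraSelective U)
    (A : ℕ → Set ℕ) (hA : ∀ n, A n ∈ U) :
    ∃ B ∈ U, ∀ x ∈ B, ∀ y ∈ B, x < y → y ∈ A x := by
  classical
  have hex : ∀ y, ∃ n, n = y ∨ y ∉ A n := fun y => ⟨y, .inl rfl⟩
  let f : ℕ → ℕ := fun y => Nat.find (hex y)
  have hf_mem : ∀ x y, x < f y → y ∈ A x := fun x y h =>
    not_not.1 (not_or.1 (Nat.find_min (hex y) h)).2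
  have hf_fiber : ∀ n, {y | f y = n} ∉ U := fun n hn => by
    refine Ultrafilter.infinite_of_le_cofinite hU (inter_mem hn (hA n))
      ((finite_singleton n).subset ?_)
    rintro y ⟨rfl, hy⟩
    exact ((Nat.find_spec (hex y)).resolve_right (not_not.2 hy)).symm
  obtain ⟨C, hC, hinj⟩ := hsel.exists_injOn hf_fiber
  choose φ hφ using hinj.exists_forall_lt
  obtain ⟨B, hB, hsparse⟩ := hsel.exists_sparse hU φ
  exact ⟨B ∩ C, inter_mem hB hC, fun x hx y hy hxy =>
    hf_mem x y (hφ x y hy.2 (hsparse x hx.1 y hy.1 hxy))⟩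

end Nat

lemma UltraSelective.exists_pairwise {X : Type*} [Countable X] [Infinite X] {α : Ultrafilter X}
    (hα : (α : Filter X) ≤ cofinite) (hsel : UltraSelective α) {R : X → X → Prop}
    (hR : ∀ x y, R x y → R y x) (hmem : ∀ x, {y | R x y} ∈ α) :
    ∃ B ∈ α, B.Pairwise R := by
  obtain ⟨_⟩ := nonempty_denumerable X
  let e : X ≃ ℕ := Denumerable.eqv X
  obtain ⟨B, hB, hdiag⟩ := (hsel.map_equiv e).exists_diagonal
    ((map_mono hα).trans e.injective.tendsto_cofinite)
    (fun n => {m | R (e.symm n) (e.symm m)}) (fun n => by simpa using hmem (e.symm n))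
  refine ⟨e ⁻¹' B, hB, fun x hx y hy hxy => ?_⟩
  rcases lt_or_gt_of_ne (e.injective.ne hxy) with h | h
  · simpa using hdiag _ hx _ hy h
  · exact hR _ _ (by simpa using hdiag _ hy _ hx h)

lemma exists_forall_lt_dist_mem_of_not_ultraCauchy {X : Type*} [MetricSpace X]
    {α : Ultrafilter X} (h : ¬UltraCauchy α) :
    ∃ ε > 0, ∀ x, {y | ε < dist x y} ∈ α := by
  simp only [UltraCauchy, not_forall, not_exists, not_and, not_le] at h
  obtain ⟨ε, hε, hfar⟩ := h
  refine ⟨ε / 2, half_pos hε, fun x => ?_⟩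
  by_contra hx
  rw [← Ultrafilter.compl_mem_iff_notMem] at hx
  obtain ⟨a, ha, b, hb, hab⟩ := hfar _ hx
  have ha' : dist x a ≤ ε / 2 := not_lt.1 ha
  have hb' : dist x b ≤ ε / 2 := not_lt.1 hb
  linarith [dist_triangle_left a b x]

theorem stmt_5 {X : Type*} [MetricSpace X] [Countable X] [Infinite X]
    (α : Ultrafilter X) (hα : (α : Filter X) ≤ Filter.cofinite)
    (hsel : UltraSelective α) :
    UltraCauchy α ∨ UltraDiscrete α := by
  refine or_iff_not_imp_left.2 fun hC => ?_
  obtain ⟨ε, hε, hfar⟩ := exists_forall_lt_dist_mem_of_not_ultraCauchy hC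
  obtain ⟨B, hB, hpair⟩ := hsel.exists_pairwise hα
    (R := fun x y => ε < dist x y) (fun x y h => by rwa [dist_comm]) hfar
  exact ⟨ε, hε, B, hB, fun a ha b hb hab => (hpair ha hb hab).le⟩
end

section
/- Every P-point is a quasi P-point: if a non-principal ultrafilter α on ℕ is a P-point, then α is a quasi P-point. -/
/-- `E` is a countable decreasing base of a uniformity on `ℕ`. -/
def IsUnifBase (E : ℕ → Set (ℕ × ℕ)) : Prop :=
  (∀ k l, k ≤ l → E l ⊆ E k) ∧
  (∀ k, ∀ x : ℕ, (x, x) ∈ E k) ∧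
  (∀ k, ∃ m, ∀ p : ℕ × ℕ, p ∈ E m → (p.2, p.1) ∈ E k) ∧
  (∀ k, ∃ m, ∀ x y z : ℕ, (x, y) ∈ E m → (y, z) ∈ E m → (x, z) ∈ E k)

/-- `α` is a quasi P-point. -/
def IsQuasiPPoint (α : Ultrafilter ℕ) : Prop :=
  ∀ E : ℕ → Set (ℕ × ℕ), IsUnifBase E →
    (∃ X ∈ α, ∃ k, ∀ i ∈ X, ∀ j ∈ X, (i, j) ∈ E k → i = j) ∨
    (∀ k, ∃ X ∈ α, ∀ i ∈ X, ∀ j ∈ X, (i, j) ∈ E k) ∨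
    (∀ A : ℕ → Set ℕ, (∀ n, A n ∈ α) → (∀ n, A (n + 1) ⊆ A n) → (⋂ n, A n) = ∅ →
      ∀ k, ∃ X ∈ α, ∀ n, (X \ {i ∈ X | ∃ j ∈ A n, (i, j) ∈ E k}).Finite)

theorem stmt_7 (α : Ultrafilter ℕ) (hα : (α : Filter ℕ) ≤ Filter.cofinite)
    (hP : IsPPoint α) : IsQuasiPPoint α := by
  intro E hE
  right; right
  intro A hAmem hAdec hAint k
  obtain ⟨_, hrefl, _, _⟩ := hE
  have hanti : Antitone A := antitone_nat_of_succ_le hAdec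
  -- the partition
  set C : ℕ → Set ℕ := fun n => Nat.rec (A 0)ᶜ (fun m _ => A m \ A (m + 1)) n with hC
  have hC0 : C 0 = (A 0)ᶜ := rfl
  have hCs : ∀ m, C (m + 1) = A m \ A (m + 1) := fun m => rfl
  -- coverage lemma
  have hcov : ∀ n i, i ∉ A n → ∃ m, m ≤ n ∧ i ∈ C m := by
    intro n
    induction n with
    | zero => intro i hi; exact ⟨0, le_rfl, hi⟩
    | succ n ih =>
      intro i hi
      by_cases h : i ∈ A n
      · exact ⟨n + 1, le_rfl, ⟨h, hi⟩⟩
      · obtain ⟨m, hm, hmi⟩ := ih i h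
        exact ⟨m, hm.trans (Nat.le_succ n), hmi⟩
  have hdisj : Pairwise fun m n => Disjoint (C m) (C n) := by
    have key : ∀ m n, m < n → Disjoint (C m) (C n) := by
      intro m n hmn
      obtain ⟨n', rfl⟩ := Nat.exists_eq_add_of_lt hmn
      rw [Set.disjoint_left]
      intro i hiCm hiCn
      have hiAn : i ∈ A (m + n') := hiCn.1
      cases m with
      | zero =>
        exact hiCm (hanti (Nat.zero_le _) hiAn)
      | succ m' =>
        exact hiCm.2 (hanti (by omega) hiAn)
    intro m n hmn
    rcases lt_or_gt_of_ne hmn with h | h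
    · exact key m n h
    · exact (key n m h).symm
  have huniv : (⋃ n, C n) = Set.univ := by
    ext i
    simp only [Set.mem_iUnion, Set.mem_univ, iff_true]
    have : i ∉ ⋂ n, A n := by rw [hAint]; exact Set.notMem_empty i
    rw [Set.mem_iInter] at this
    push_neg at this
    obtain ⟨n, hn⟩ := this
    obtain ⟨m, _, hm⟩ := hcov n i hn
    exact ⟨m, hm⟩
  have hnotmem : ∀ n, C n ∉ α := by
    intro n hn
    cases n with
    | zero => exact (Ultrafilter.compl_notMem_iff.mpr (hAmem 0)) hn
    | succ m =>
      have : (A (m + 1))ᶜ ∈ α :=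
        Filter.mem_of_superset hn (fun i hi => hi.2)
      exact (Ultrafilter.compl_notMem_iff.mpr (hAmem (m + 1))) this
  obtain ⟨X, hXα, hXfin⟩ := hP C hdisj huniv hnotmem
  refine ⟨X, hXα, fun n => ?_⟩
  have hsub : X \ {i ∈ X | ∃ j ∈ A n, (i, j) ∈ E k} ⊆
      ⋃ m ∈ Finset.range (n + 1), (X ∩ C m) := by
    intro i hi
    have hiX : i ∈ X := hi.1
    have hiA : i ∉ A n := by
      intro hiA
      exact hi.2 ⟨hiX, i, hiA, hrefl k i⟩
    obtain ⟨m, hm, hmi⟩ := hcov n i hiA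
    simp only [Set.mem_iUnion, Finset.mem_range]
    exact ⟨m, by omega, hiX, hmi⟩
  exact Set.Finite.subset
    ((Finset.range (n + 1)).finite_toSet.biUnion (fun m _ => hXfin m)) hsub
end

section
/- Let (s_n) be a flatness scale for a non-principal ultrafilter α on ℕ. Then for every r > 0 and every A ∈ α, the set K(r,A) := {k ∈ ℕ : there exists m ∈ ℕ such that s_n(k) ≥ r for all n ∈ A with n ≥ m} is finite. -/
/-- `ω_f(x) = sup_{k≥1} max {|x i − x j| : f^{k−1}(1) ≤ i ≤ j < f^k(1)}`. -/
noncomputable def omegaF (f : ℕ → ℕ) (x : ℕ → ℝ) : ℝ :=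
  sSup {d : ℝ | ∃ k i j : ℕ, f^[k] 1 ≤ i ∧ i ≤ j ∧ j < f^[k + 1] 1 ∧ d = |x i - x j|}

/-- `s` is a flatness scale for `α`: each `s n` takes values in `[0,1]`, there is `r > 0`
with `sup_i s n i ≥ r` and `lim_{i→∞} s n i = 0` for every `n`, and
`lim_{n→α} ω_f(s n) = 0` for every strictly increasing `f`. -/
def IsFlatnessScale (α : Ultrafilter ℕ) (s : ℕ → ℕ → ℝ) : Prop :=
  (∀ n i, s n i ∈ Set.Icc (0 : ℝ) 1) ∧
  (∃ r : ℝ, 0 < r ∧ ∀ n, r ≤ ⨆ i, s n i) ∧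
  (∀ n, Filter.Tendsto (s n) Filter.atTop (nhds 0)) ∧
  (∀ f : ℕ → ℕ, StrictMono f →
    Filter.Tendsto (fun n => omegaF f (s n)) (α : Filter ℕ) (nhds 0))

/-- `α` is flat if it admits a flatness scale. -/
def IsFlat (α : Ultrafilter ℕ) : Prop := ∃ s : ℕ → ℕ → ℝ, IsFlatnessScale α s




open Classical in
/-- Given a "doubling" sequence `σ` with `σ 0 = 1`, there is a strictly monotone `f : ℕ → ℕ`
whose orbit of `1` is exactly `σ`. -/
lemma exists_strictMono_orbit (σ : ℕ → ℕ) (h0 : σ 0 = 1) (h01 : 1 < σ 1)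
    (hdb : ∀ i, 2 * σ (i + 1) ≤ σ (i + 2)) :
    ∃ f : ℕ → ℕ, StrictMono f ∧ ∀ t, f^[t] 1 = σ t := by
  have pos1 : ∀ i, 1 ≤ σ (i + 1) := by
    intro i
    induction i with
    | zero => show 1 ≤ σ 1; omega
    | succ j ih =>
      have h := hdb j
      have e : j + 1 + 1 = j + 2 := rfl
      rw [e]; omega
  have pos : ∀ i, 1 ≤ σ i := by
    intro i; cases i with
    | zero => omega
    | succ j => exact pos1 j
  have hmono : StrictMono σ := by
    apply strictMono_nat_of_lt_succ
    intro i
    cases i with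
    | zero => show σ 0 < σ 1; omega
    | succ j =>
      have h := hdb j
      have h2 := pos1 j
      show σ (j + 1) < σ (j + 2)
      omega
  have hσge : ∀ i, i + 1 ≤ σ i := by
    intro i
    induction i with
    | zero => omega
    | succ j ih =>
      have h : σ j < σ (j + 1) := hmono (Nat.lt_succ_self j)
      show j + 1 + 1 ≤ σ (j + 1)
      omega
  set T : ℕ → ℕ := fun x => Nat.findGreatest (fun i => σ i ≤ x) x with hT
  have hT1 : ∀ x, 1 ≤ x → σ (T x) ≤ x := by
    intro x hx
    exact Nat.findGreatest_spec (P := fun i => σ i ≤ x) (Nat.zero_le x) (by omega)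
  have hT2 : ∀ x, 1 ≤ x → x < σ (T x + 1) := by
    intro x hx
    by_contra hc
    push_neg at hc
    have h1 : T x + 1 ≤ x := by have := hσge (T x + 1); omega
    have h3 := Nat.le_findGreatest (P := fun i => σ i ≤ x) h1 hc
    have h4 : T x + 1 ≤ T x := by simp only [hT]; exact h3
    omega
  have hTuniq : ∀ i x, σ i ≤ x → x < σ (i + 1) → T x = i := by
    intro i x h1 h2
    have hx1 : 1 ≤ x := le_trans (pos i) h1
    have hle : i ≤ T x := Nat.le_findGreatest (P := fun j => σ j ≤ x) (by have := hσge i; omega) h1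
    have hge : T x ≤ i := by
      by_contra hc
      push_neg at hc
      have : σ (i + 1) ≤ σ (T x) := hmono.monotone (by omega)
      have := hT1 x hx1
      omega
    omega
  refine ⟨fun x => if x = 0 then 0 else σ (T x + 1) + (x - σ (T x)), ?_, ?_⟩
  · apply strictMono_nat_of_lt_succ
    intro x
    cases x with
    | zero =>
      show (if (0:ℕ) = 0 then (0:ℕ) else σ (T 0 + 1) + (0 - σ (T 0))) <
        (if (1:ℕ) = 0 then (0:ℕ) else σ (T 1 + 1) + (1 - σ (T 1)))
      norm_num
      have := pos (T 1 + 1); omega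
    | succ y =>
      set x := y + 1 with hxdef
      have hx1 : 1 ≤ x := by omega
      simp only [if_neg (by omega : x ≠ 0), if_neg (by omega : x + 1 ≠ 0)]
      have ha := hT1 x hx1
      have hb := hT2 x hx1
      rcases lt_or_eq_of_le (by omega : x + 1 ≤ σ (T x + 1)) with hlt | heq
      · have : T (x + 1) = T x := hTuniq (T x) (x + 1) (by omega) hlt
        rw [this]; omega
      · have hTx1 : T (x + 1) = T x + 1 := by
          apply hTuniq
          · omega
          · have h2 := hdb (T x)
            have e : T x + 1 + 1 = T x + 2 := rfl
            rw [e]; omega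
        rw [hTx1]
        have h2 := hdb (T x)
        have e : T x + 1 + 1 = T x + 2 := rfl
        rw [e]
        have h3 := pos (T x)
        have h4 := pos (T x + 2)
        omega
  · intro t
    induction t with
    | zero => simpa using h0.symm
    | succ t ih =>
      rw [Function.iterate_succ_apply', ih]
      have hne : σ t ≠ 0 := by have := pos t; omega
      simp only [if_neg hne]
      have : T (σ t) = t := hTuniq t (σ t) le_rfl (hmono (Nat.lt_succ_self t))
      rw [this]
      omega

lemma omegaF_ge (f : ℕ → ℕ) (x : ℕ → ℝ) (hb : ∀ i, x i ∈ Set.Icc (0 : ℝ) 1)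
    {k i j : ℕ} (h1 : f^[k] 1 ≤ i) (h2 : i ≤ j) (h3 : j < f^[k + 1] 1) :
    |x i - x j| ≤ omegaF f x := by
  apply le_csSup
  · refine ⟨1, ?_⟩
    rintro d ⟨k', i', j', -, -, -, rfl⟩
    have hi := hb i'
    have hj := hb j'
    simp only [Set.mem_Icc] at hi hj
    rw [abs_sub_le_iff]
    constructor <;> linarith
  · exact ⟨k, i, j, h1, h2, h3, rfl⟩

/-- Core contradiction: if on an `α`-large set of `n` there is a block of `σ` on which
`s n` has variation `> r/2`, flatness fails. -/
lemma core_contradiction (α : Ultrafilter ℕ) (s : ℕ → ℕ → ℝ)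
    (hIcc : ∀ n i, s n i ∈ Set.Icc (0 : ℝ) 1)
    (hflat : ∀ f : ℕ → ℕ, StrictMono f →
      Filter.Tendsto (fun n => omegaF f (s n)) (α : Filter ℕ) (nhds 0))
    (r : ℝ) (hr : 0 < r)
    (σ : ℕ → ℕ) (h0 : σ 0 = 1) (h01 : 1 < σ 1) (hdb : ∀ i, 2 * σ (i + 1) ≤ σ (i + 2))
    (hbig : {n : ℕ | ∃ k u v : ℕ, σ k ≤ u ∧ u ≤ v ∧ v < σ (k + 1) ∧
      r / 2 < |s n u - s n v|} ∈ α) : False := by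
  obtain ⟨f, hfmono, horb⟩ := exists_strictMono_orbit σ h0 h01 hdb
  have htend := hflat f hfmono
  have hev : ∀ᶠ n in (α : Filter ℕ), dist (omegaF f (s n)) 0 < r / 2 :=
    Metric.tendsto_nhds.mp htend (r / 2) (by linarith)
  have hbig' : ∀ᶠ n in (α : Filter ℕ), n ∈ {n : ℕ | ∃ k u v : ℕ, σ k ≤ u ∧ u ≤ v ∧
      v < σ (k + 1) ∧ r / 2 < |s n u - s n v|} := Filter.eventually_mem_set.mpr hbig
  obtain ⟨n, hd, k, u, v, hku, huv, hvk, hgap⟩ := (hev.and hbig').exists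
  have hle : |s n u - s n v| ≤ omegaF f (s n) :=
    omegaF_ge f (s n) (hIcc n) (by rw [horb k]; exact hku) huv (by rw [horb (k + 1)]; exact hvk)
  rw [Real.dist_eq, sub_zero] at hd
  have := le_abs_self (omegaF f (s n))
  linarith [hd, hle, hgap, abs_nonneg (omegaF f (s n))]

theorem stmt_11 (α : Ultrafilter ℕ) (hα : (α : Filter ℕ) ≤ Filter.cofinite)
    (s : ℕ → ℕ → ℝ) (hs : IsFlatnessScale α s) :
    ∀ r : ℝ, 0 < r → ∀ A ∈ α,
      {k : ℕ | ∃ m : ℕ, ∀ n ∈ A, m ≤ n → r ≤ s n k}.Finite := by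
  classical
  intro r hr A hA
  by_contra hKinf
  obtain ⟨hIcc, -, hlim, hflat⟩ := hs
  set Kset := {k : ℕ | ∃ m : ℕ, ∀ n ∈ A, m ≤ n → r ≤ s n k} with hKset
  have hKinf' : Kset.Infinite := hKinf
  have hKgt : ∀ d : ℕ, ∃ k ∈ Kset, d < k := by
    intro d
    obtain ⟨k, hk⟩ := (hKinf'.diff (Set.finite_le_nat d)).nonempty
    exact ⟨k, hk.1, by simpa using hk.2⟩
  -- the function N : for j ≥ N n, s n j < r/4
  have hNex : ∀ n, ∃ N, ∀ j, N ≤ j → s n j < r / 4 := by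
    intro n
    obtain ⟨N, hN⟩ := Metric.tendsto_atTop.mp (hlim n) (r / 4) (by linarith)
    refine ⟨N, fun j hj => ?_⟩
    have h1 := hN j hj
    rw [Real.dist_eq, sub_zero] at h1
    calc s n j ≤ |s n j| := le_abs_self _
      _ < r / 4 := h1
  choose N hN using hNex
  -- thresholds for elements of Kset
  have hMex : ∀ k, ∃ m, k ∈ Kset → ∀ n ∈ A, m ≤ n → r ≤ s n k := by
    intro k
    by_cases hk : k ∈ Kset
    · obtain ⟨m, hm⟩ := hk
      exact ⟨m, fun _ => hm⟩
    · exact ⟨0, fun h => absurd h hk⟩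
  choose M hM using hMex
  -- D n : the last point where s n ≥ 3r/4
  set D : ℕ → ℕ := fun n => Nat.findGreatest (fun j => 3 * r / 4 ≤ s n j) (N n) with hD
  have hkN : ∀ n k, k ∈ Kset → n ∈ A → M k ≤ n → k < N n := by
    intro n k hk hnA hmn
    by_contra hc
    push_neg at hc
    have h1 := hN n k hc
    have h2 := hM k hk n hnA hmn
    linarith
  have hDge : ∀ n k, k ∈ Kset → n ∈ A → M k ≤ n → k ≤ D n := by
    intro n k hk hnA hmn
    have h1 := hkN n k hk hnA hmn
    have h2 := hM k hk n hnA hmn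
    simp only [hD]
    exact Nat.le_findGreatest (le_of_lt h1) (by linarith)
  have hDle : ∀ n, D n ≤ N n := by
    intro n
    simp only [hD]
    exact Nat.findGreatest_le _
  obtain ⟨k₁, hk₁K, hk₁⟩ := hKgt 0
  have hD34 : ∀ n, n ∈ A → M k₁ ≤ n → 3 * r / 4 ≤ s n (D n) := by
    intro n hnA hmn
    have h1 := hkN n k₁ hk₁K hnA hmn
    have h2 := hM k₁ hk₁K n hnA hmn
    simp only [hD]
    exact Nat.findGreatest_spec (P := fun j => 3 * r / 4 ≤ s n j) (le_of_lt h1) (by linarith)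
  -- D diverges along A in order, so sublevel sets are finite
  have hfin : ∀ d, {n | n ∈ A ∧ D n ≤ d}.Finite := by
    intro d
    obtain ⟨k, hkK, hdk⟩ := hKgt d
    apply Set.Finite.subset (Set.finite_Iio (M k))
    rintro n ⟨hnA, hnd⟩
    by_contra hc
    simp only [Set.mem_Iio, not_lt] at hc
    have := hDge n k hkK hnA hc
    omega
  have hbnd : ∀ d, ∃ b, ∀ n, n ∈ A → D n ≤ d → N n < b := by
    intro d
    obtain ⟨b, hb⟩ := ((hfin d).image N).bddAbove
    refine ⟨b + 1, fun n hnA hnd => ?_⟩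
    have : N n ≤ b := hb (Set.mem_image_of_mem N ⟨hnA, hnd⟩)
    omega
  choose B hB using hbnd
  -- the fast sequence τ
  set τ : ℕ → ℕ := fun j => Nat.rec 1 (fun _ t => max (2 * t) (B t)) j with hτ
  have hτ0 : τ 0 = 1 := rfl
  have hτs : ∀ j, τ (j + 1) = max (2 * τ j) (B (τ j)) := fun _ => rfl
  have hτpos : ∀ j, 1 ≤ τ j := by
    intro j
    induction j with
    | zero => exact hτ0.ge
    | succ j ih => rw [hτs j]; omega
  have hτdb : ∀ j, 2 * τ j ≤ τ (j + 1) := fun j => by rw [hτs j]; exact le_max_left _ _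
  have hτmono : StrictMono τ := strictMono_nat_of_lt_succ (by
    intro j
    have h1 := hτdb j
    have h2 := hτpos j
    omega)
  have hτN : ∀ j n, n ∈ A → D n ≤ τ j → N n < τ (j + 1) := by
    intro j n hnA hd
    have h1 : N n < B (τ j) := hB (τ j) n hnA hd
    have h2 : B (τ j) ≤ τ (j + 1) := by rw [hτs j]; exact le_max_right _ _
    omega
  have hτge : ∀ j, j + 1 ≤ τ j := by
    intro j
    induction j with
    | zero => exact hτ0.ge
    | succ j ih =>
      have h1 := hτdb j
      omega
  -- covering by parity classes
  have hcof : {n : ℕ | M k₁ ≤ n} ∈ α := by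
    have h1 : {n : ℕ | M k₁ ≤ n} ∈ Filter.cofinite := by
      rw [Filter.mem_cofinite]
      apply Set.Finite.subset (Set.finite_Iio (M k₁))
      intro n hn
      simp only [Set.mem_compl_iff, Set.mem_setOf_eq, not_le] at hn
      exact hn
    exact hα h1
  set Y : ℕ → Set ℕ := fun e =>
    {n | n ∈ A ∧ M k₁ ≤ n ∧ ∃ i, τ (2 * i + e) ≤ D n ∧ D n < τ (2 * i + e + 1)} with hY
  have hcover : A ∩ {n : ℕ | M k₁ ≤ n} ⊆ Y 0 ∪ Y 1 := by
    rintro n ⟨hnA, hmn⟩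
    have h1 : 1 ≤ D n := le_trans (by omega) (hDge n k₁ hk₁K hnA hmn)
    set j := Nat.findGreatest (fun j => τ j ≤ D n) (D n) with hj
    have hj1 : τ j ≤ D n :=
      Nat.findGreatest_spec (P := fun j => τ j ≤ D n) (Nat.zero_le _)
        (by show τ 0 ≤ D n; omega)
    have hj2 : D n < τ (j + 1) := by
      by_contra hc
      push_neg at hc
      have h3 : j + 1 ≤ D n := by have := hτge (j + 1); omega
      have h5 := Nat.le_findGreatest (P := fun j => τ j ≤ D n) h3 hc
      rw [← hj] at h5
      omega
    rcases Nat.even_or_odd j with ⟨i, hi⟩ | ⟨i, hi⟩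
    · left
      refine ⟨hnA, hmn, i, ?_, ?_⟩
      · rw [show 2 * i + 0 = j from by omega]; exact hj1
      · rw [show 2 * i + 0 + 1 = j + 1 from by omega]; exact hj2
    · right
      refine ⟨hnA, hmn, i, ?_, ?_⟩
      · rw [show 2 * i + 1 = j from by omega]; exact hj1
      · rw [show 2 * i + 1 + 1 = j + 1 from by omega]; exact hj2
  have hYmem : Y 0 ∪ Y 1 ∈ α := Filter.mem_of_superset (Filter.inter_mem hA hcof) hcover
  -- common final facts
  have hgap : ∀ n, n ∈ A → M k₁ ≤ n → r / 2 < |s n (D n) - s n (N n)| := by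
    intro n hnA hmn
    have ha := hD34 n hnA hmn
    have hb := hN n (N n) le_rfl
    have hc : r / 2 < s n (D n) - s n (N n) := by linarith
    exact lt_of_lt_of_le hc (le_abs_self _)
  rcases Ultrafilter.union_mem_iff.mp hYmem with hY0 | hY1
  · -- even case: blocks [τ (2i), τ (2i+2))
    refine core_contradiction α s hIcc hflat r hr (fun i => τ (2 * i)) ?_ ?_ ?_ ?_
    · exact hτ0
    · show (1 : ℕ) < τ 2
      rw [← hτ0]
      exact hτmono (by omega : (0:ℕ) < 2)
    · intro i
      show 2 * τ (2 * i + 2) ≤ τ (2 * i + 4)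
      have h1 : 2 * τ (2 * i + 2) ≤ τ (2 * i + 3) := hτdb (2 * i + 2)
      have h2 : τ (2 * i + 3) ≤ τ (2 * i + 4) :=
        hτmono.monotone (by omega : 2 * i + 3 ≤ 2 * i + 4)
      omega
    · refine Filter.mem_of_superset hY0 ?_
      rintro n ⟨hnA, hmn, i, hi1, hi2⟩
      refine ⟨i, D n, N n, ?_, hDle n, ?_, hgap n hnA hmn⟩
      · exact hi1
      · have h3 : D n ≤ τ (2 * i + 1) := le_of_lt hi2
        have h4 : N n < τ (2 * i + 2) := hτN (2 * i + 1) n hnA h3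
        exact h4
  · -- odd case: blocks [1, τ 1), [τ (2i+1), τ (2i+3))
    refine core_contradiction α s hIcc hflat r hr
      (fun i => if i = 0 then 1 else τ (2 * i - 1)) ?_ ?_ ?_ ?_
    · simp
    · show (1 : ℕ) < τ 1
      have h1 : 2 * τ 0 ≤ τ 1 := hτdb 0
      rw [hτ0] at h1
      omega
    · intro i
      show 2 * τ (2 * i + 1) ≤ τ (2 * i + 3)
      have h1 : 2 * τ (2 * i + 1) ≤ τ (2 * i + 2) := hτdb (2 * i + 1)
      have h2 : τ (2 * i + 2) ≤ τ (2 * i + 3) :=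
        hτmono.monotone (by omega : 2 * i + 2 ≤ 2 * i + 3)
      omega
    · refine Filter.mem_of_superset hY1 ?_
      rintro n ⟨hnA, hmn, i, hi1, hi2⟩
      refine ⟨i + 1, D n, N n, ?_, hDle n, ?_, hgap n hnA hmn⟩
      · show τ (2 * i + 1) ≤ D n
        exact hi1
      · show N n < τ (2 * i + 3)
        have h3 : D n ≤ τ (2 * i + 2) := le_of_lt hi2
        exact hτN (2 * i + 2) n hnA h3
end

section
/- Let (M,ρ) be a metric space and α a non-principal ultrafilter on ℕ that is a P-point. If x = (x_n) and y = (y_n) are bounded sequences in M such that {n ∈ ℕ : ρ(x_n,y_n) < ε} ∈ α for every ε > 0, then there exists A ∈ α such that for every ε > 0 the set {n ∈ ℕ : ρ(x_n,y_n) < ε} is cofinite in A (equivalently, ρ(x_n,y_n) → 0 as n → ∞ along A). -/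
theorem stmt_14 {M : Type*} [MetricSpace M]
    (α : Ultrafilter ℕ) (hα : (α : Filter ℕ) ≤ Filter.cofinite)
    (hP : IsPPoint α) (x y : ℕ → M)
    (hx : Bornology.IsBounded (Set.range x)) (hy : Bornology.IsBounded (Set.range y))
    (h : ∀ ε : ℝ, 0 < ε → {n : ℕ | dist (x n) (y n) < ε} ∈ α) :
    ∃ A ∈ α, ∀ ε : ℝ, 0 < ε → (A \ {n : ℕ | dist (x n) (y n) < ε}).Finite := by
  set d : ℕ → ℝ := fun n => dist (x n) (y n) with hd
  by_cases hZ : {n | d n = 0} ∈ α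
  · refine ⟨_, hZ, fun ε hε => ?_⟩
    have : {n | d n = 0} \ {n : ℕ | d n < ε} = ∅ := by
      rw [Set.diff_eq_empty]
      intro n h0
      simp only [Set.mem_setOf_eq] at h0 ⊢
      rw [h0]
      exact hε
    rw [this]
    exact Set.finite_empty
  · set A : ℕ → Set ℕ := fun k => match k with
      | 0 => {n | d n = 0 ∨ 1 ≤ d n}
      | (k+1) => {n | 1/(k+2) ≤ d n ∧ d n < 1/(k+1)}
      with hA
    have hdnn : ∀ n, 0 ≤ d n := fun n => dist_nonneg
    -- uniqueness of index
    have hdisj : Pairwise fun m n => Disjoint (A m) (A n) := by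
      have key : ∀ j k, j < k → Disjoint (A j) (A k) := by
        intro j k hjk
        rw [Set.disjoint_left]
        intro n hj hk
        match j, k with
        | 0, (k+1) =>
          rcases hj with h0 | h1
          · have h1 := hk.1
            rw [h0] at h1
            have h2 : (0:ℝ) < 1/((k:ℝ)+2) := by positivity
            linarith
          · have h2 := hk.2
            have : (1:ℝ)/((k:ℝ)+1) ≤ 1 := by
              rw [div_le_one (by positivity)]; linarith
            linarith
        | (j+1), (k+1) =>
          have hjk' : j < k := Nat.lt_of_succ_lt_succ hjk
          have h1 := hj.1  -- 1/(j+2) ≤ d n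
          have h2 := hk.2  -- d n < 1/(k+1)
          have : (1:ℝ)/((k:ℝ)+1) ≤ 1/((j:ℝ)+2) := by
            apply one_div_le_one_div_of_le (by positivity)
            have : (j:ℝ) + 1 ≤ (k:ℝ) := by exact_mod_cast hjk'
            linarith
          linarith
      intro m n hmn
      rcases lt_or_gt_of_ne hmn with hlt | hgt
      · exact key m n hlt
      · exact (key n m hgt).symm
    have hcover : (⋃ n, A n) = Set.univ := by
      ext n
      simp only [Set.mem_iUnion, Set.mem_univ, iff_true]
      by_cases h0 : d n = 0
      · exact ⟨0, Or.inl h0⟩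
      by_cases h1 : 1 ≤ d n
      · exact ⟨0, Or.inr h1⟩
      push_neg at h1
      have hpos : 0 < d n := lt_of_le_of_ne (hdnn n) (Ne.symm h0)
      have hex : ∃ k : ℕ, 1/((k:ℝ)+1) ≤ d n := by
        obtain ⟨k, hk⟩ := exists_nat_one_div_lt hpos
        exact ⟨k, hk.le⟩
      classical
      let k := Nat.find hex
      have hkspec : 1/((k:ℝ)+1) ≤ d n := Nat.find_spec hex
      have hk0 : k ≠ 0 := by
        intro hk0
        rw [hk0] at hkspec
        simp at hkspec
        linarith
      obtain ⟨m, hm⟩ := Nat.exists_eq_succ_of_ne_zero hk0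
      have hmin : ¬ (1/((m:ℝ)+1) ≤ d n) := by
        have := Nat.find_min hex (by omega : m < k)
        exact this
      push_neg at hmin
      rw [hm] at hkspec
      push_cast at hkspec
      rw [show ((m:ℝ)+1+1) = (m:ℝ)+2 by ring] at hkspec
      refine ⟨m+1, ?_, ?_⟩
      · push_cast
        linarith
      · push_cast
        linarith
    have hnotin : ∀ k, A k ∉ α := by
      intro k
      match k with
      | 0 =>
        intro hmem
        have heq : ({n | d n = 0} ∪ {n | 1 ≤ d n} : Set ℕ) = A 0 := by
          ext n; constructor
          · intro hn; exact hn
          · intro hn; exact hn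
        have : {n | d n = 0} ∈ α ∨ {n | 1 ≤ d n} ∈ α :=
          (Ultrafilter.union_mem_iff).mp (heq ▸ hmem)
        rcases this with h' | h'
        · exact hZ h'
        · have h'' := h (1:ℝ) one_pos
          have : ({n : ℕ | d n < 1} ∩ {n | 1 ≤ d n} : Set ℕ) ∈ α := Filter.inter_mem h'' h'
          obtain ⟨n, hn1, hn2⟩ := (Ultrafilter.nonempty_of_mem this)
          simp only [Set.mem_setOf_eq] at hn1 hn2
          linarith
      | (k+1) =>
        intro hmem
        have hε : (0:ℝ) < 1/((k:ℝ)+2) := by positivity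
        have h'' := h _ hε
        have : ({n : ℕ | d n < 1/((k:ℝ)+2)} ∩ A (k+1) : Set ℕ) ∈ α := Filter.inter_mem h'' hmem
        obtain ⟨n, hn1, hn2⟩ := (Ultrafilter.nonempty_of_mem this)
        simp only [Set.mem_setOf_eq] at hn1
        have := hn2.1
        linarith
    obtain ⟨X, hXα, hXfin⟩ := hP A hdisj hcover hnotin
    refine ⟨X, hXα, fun ε hε => ?_⟩
    obtain ⟨K, hK⟩ := exists_nat_one_div_lt hε
    have hsub : (X \ {n : ℕ | d n < ε}) ⊆ ⋃ k ∈ Finset.range (K+1), (X ∩ A k) := by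
      intro n hn
      obtain ⟨hnX, hnε⟩ := hn
      simp only [Set.mem_setOf_eq, not_lt] at hnε
      have : n ∈ ⋃ k, A k := by rw [hcover]; trivial
      obtain ⟨k, hk⟩ := Set.mem_iUnion.mp this
      simp only [Set.mem_iUnion, Finset.mem_range]
      refine ⟨k, ?_, hnX, hk⟩
      by_contra hkK
      push_neg at hkK
      -- k ≥ K+1, so k = m+1 with m ≥ K
      obtain ⟨m, hm⟩ := Nat.exists_eq_succ_of_ne_zero (by omega : k ≠ 0)
      subst hm
      have h2 := hk.2
      have hmK : K ≤ m := by omega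
      have : (1:ℝ)/((m:ℝ)+1) ≤ 1/((K:ℝ)+1) := by
        apply one_div_le_one_div_of_le (by positivity)
        exact_mod_cast Nat.succ_le_succ hmK
      linarith
    exact Set.Finite.subset (Set.Finite.biUnion (Finset.range (K+1)).finite_toSet
      (fun k _ => hXfin k)) hsub
end

section
/- Let X be a separable topological space, Y a metric space, and suppose (f_n) is an equicontinuous sequence of functions from X into Y converging pointwise along a non-principal ultrafilter α on ℕ to a function f : X → Y. If α is a P-point, then there exists N ∈ α such that f_n(x) → f(x) as n → ∞ along N, for every x ∈ X. -/
theorem stmt_15 {X Y : Type*} [TopologicalSpace X] [TopologicalSpace.SeparableSpace X]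
    [MetricSpace Y]
    (α : Ultrafilter ℕ) (hα : (α : Filter ℕ) ≤ Filter.cofinite)
    (hP : IsPPoint α)
    (F : ℕ → X → Y) (f : X → Y) (hequi : Equicontinuous F)
    (hconv : ∀ x : X, Filter.Tendsto (fun n => F n x) (α : Filter ℕ) (nhds (f x))) :
    ∃ N ∈ α, ∀ x : X,
      Filter.Tendsto (fun n => F n x) (Filter.atTop ⊓ Filter.principal N) (nhds (f x)) := by
  classical
  rcases isEmpty_or_nonempty X with hX | hX
  · exact ⟨Set.univ, Filter.univ_mem, fun x => isEmptyElim x⟩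
  set d : ℕ → X := TopologicalSpace.denseSeq X with hd
  have hdense : DenseRange d := TopologicalSpace.denseRange_denseSeq X
  -- the predicate
  set P : ℕ → ℕ → Prop := fun m n => ∀ k ≤ m, dist (F n (d k)) (f (d k)) < 1 / (m : ℝ) with hPdef
  set h : ℕ → ℕ := fun n => Nat.findGreatest (fun m => P m n) n with hh
  -- h tends to infinity along α
  have hbig : ∀ m : ℕ, ∀ᶠ n in (α : Filter ℕ), m + 1 ≤ h n := by
    intro m
    have h1 : ∀ᶠ n in (α : Filter ℕ), m + 1 ≤ n := by
      refine hα ?_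
      rw [Nat.cofinite_eq_atTop]
      exact Filter.eventually_ge_atTop (m + 1)
    have h2 : ∀ᶠ n in (α : Filter ℕ), ∀ k ∈ Set.Iic (m + 1),
        dist (F n (d k)) (f (d k)) < 1 / ((m : ℝ) + 1) := by
      rw [Filter.eventually_all_finite (Set.finite_Iic (m + 1))]
      intro k _
      have := (hconv (d k)).eventually (Metric.ball_mem_nhds (f (d k))
        (by positivity : (0:ℝ) < 1 / ((m : ℝ) + 1)))
      filter_upwards [this] with n hn
      simpa [Metric.mem_ball, dist_comm] using hn
    filter_upwards [h1, h2] with n hn1 hn2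
    refine Nat.le_findGreatest hn1 ?_
    intro k hk
    have := hn2 k hk
    push_cast
    convert this using 2
  -- the partition
  set A : ℕ → Set ℕ := fun m => {n | h n = m} with hA
  have hApart : Pairwise fun m n => Disjoint (A m) (A n) := by
    intro m n hmn
    simp only [Set.disjoint_left, hA, Set.mem_setOf_eq]
    rintro a rfl hn
    exact hmn hn
  have hAunion : (⋃ n, A n) = Set.univ := by
    ext n; simp [hA]
  have hAnotmem : ∀ m, A m ∉ α := by
    intro m hm
    have := hbig m
    have h2 : ∀ᶠ n in (α : Filter ℕ), h n = m := hm
    have := (this.and h2).exists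
    omega
  obtain ⟨N, hN, hNfin⟩ := hP A hApart hAunion hAnotmem
  refine ⟨N, hN, ?_⟩
  set L : Filter ℕ := Filter.atTop ⊓ Filter.principal N with hL
  -- h tends to infinity along L
  have htendsh : Filter.Tendsto h L Filter.atTop := by
    rw [Filter.tendsto_atTop]
    intro b
    have hfin : (⋃ j ∈ Finset.range b, N ∩ A j).Finite :=
      Set.Finite.biUnion (Finset.range b).finite_toSet (fun j _ => hNfin j)
    obtain ⟨n₀, hn₀⟩ := hfin.bddAbove
    rw [Filter.eventually_inf_principal]
    filter_upwards [Filter.eventually_ge_atTop (n₀ + 1)] with n hn hnN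
    by_contra hcon
    push_neg at hcon
    have : n ∈ ⋃ j ∈ Finset.range b, N ∩ A j := by
      refine Set.mem_biUnion (Finset.mem_range.2 hcon) ⟨hnN, rfl⟩
    have := hn₀ this
    omega
  -- convergence at dense points along L
  have hdconv : ∀ k : ℕ, Filter.Tendsto (fun n => F n (d k)) L (nhds (f (d k))) := by
    intro k
    rw [Metric.tendsto_nhds]
    intro ε hε
    obtain ⟨m, hm⟩ := exists_nat_one_div_lt hε
    filter_upwards [htendsh.eventually (Filter.eventually_ge_atTop (max (m + 1) k))]
      with n hn
    have hk : k ≤ h n := le_trans (le_max_right _ _) hn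
    have hm1 : m + 1 ≤ h n := le_trans (le_max_left _ _) hn
    have hhpos : h n ≠ 0 := by omega
    have hPh : P (h n) n := (Nat.findGreatest_eq_iff.1 rfl).2.1 hhpos
    have := hPh k hk
    refine lt_of_lt_of_le (lt_of_lt_of_le this ?_) hm.le
    apply one_div_le_one_div_of_le
    · positivity
    · exact_mod_cast Nat.cast_le.2 hm1
  -- conclude via equicontinuity
  intro x
  rw [Metric.tendsto_nhds]
  intro ε hε
  have hε3 : (0:ℝ) < ε / 3 := by linarith
  have hEq := (Metric.equicontinuousAt_iff_right.1 (hequi x)) (ε/3) hε3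
  obtain ⟨U, hUsub, hUopen, hxU⟩ := mem_nhds_iff.1 hEq
  obtain ⟨k, hk⟩ := hdense.exists_mem_open hUopen ⟨x, hxU⟩
  have hclose : ∀ n, dist (F n x) (F n (d k)) < ε / 3 := fun n => hUsub hk n
  have hfx : dist (f x) (f (d k)) ≤ ε / 3 := by
    have htd : Filter.Tendsto (fun n => dist (F n x) (F n (d k))) (α : Filter ℕ)
        (nhds (dist (f x) (f (d k)))) := Filter.Tendsto.dist (hconv x) (hconv (d k))
    refine le_of_tendsto htd (Filter.Eventually.of_forall fun n => (hclose n).le)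
  filter_upwards [(Metric.tendsto_nhds.1 (hdconv k)) (ε/3) hε3] with n hn
  have h4 := dist_triangle4 (F n x) (F n (d k)) (f (d k)) (f x)
  have h5 : dist (f (d k)) (f x) ≤ ε/3 := by rw [dist_comm]; exact hfx
  linarith [hclose n]
end
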